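/- Let k ≥ 1 be an integer and let f : (1,∞) → ℝ be k times continuously differentiable such that f^{(ℓ)} is Lebesgue integrable on (1,∞) for every ℓ ∈ {0, 1, …, k}. If the function x ↦ x^k f^{(k)}(x) is Lebesgue integrable on (1,∞), then: (a) for every ℓ ∈ {0, 1, …, k−1} the function x ↦ x^ℓ f^{(ℓ)}(x) is Lebesgue integrable on (1,∞); and (b) for every ℓ ∈ {1, …, k} one has x^ℓ f^{(ℓ−1)}(x) → 0 as x → ∞. -/

import Mathlib

/-!
Writing `g = f^{(ℓ)}`, integrability of `g` and `g'` forces `g(x) = -∫_x^∞ g'`, hence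
`|x^m g(x)| ≤ ∫_x^∞ t^m |g'(t)|`. This tail tends to `0` when `t^m g'` is integrable, which gives
the limits, and it is itself integrable when `t^{m+1} g'` is (the tail of `h ≥ 0` is integrable
as soon as `t h(t)` is), which lets the integrability of `x^ℓ f^{(ℓ)}` descend from `ℓ = k`.
-/

open MeasureTheory Set Filter Topology

section Tail

variable {E : Type*} [NormedAddCommGroup E] [NormedSpace ℝ E] [CompleteSpace E]

theorem hasDerivAt_integral_Ioi {q : ℝ → E} {a x : ℝ} (hq : IntegrableOn q (Ioi a))
    (hx : a < x) (hc : ContinuousAt q x) :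
    HasDerivAt (fun y => ∫ t in Ioi y, q t) (-q x) x := by
  have hprim : HasDerivAt (fun y => ∫ t in a..y, q t) (q x) x :=
    intervalIntegral.integral_hasDerivAt_right
      ((intervalIntegrable_iff_integrableOn_Ioc_of_le hx.le).2 (hq.mono_set Ioc_subset_Ioi_self))
      (AEStronglyMeasurable.stronglyMeasurableAtFilter_of_mem hq.aestronglyMeasurable
        (Ioi_mem_nhds hx)) hc
  refine (hprim.const_sub (∫ t in Ioi a, q t)).congr_of_eventuallyEq ?_
  filter_upwards [Ioi_mem_nhds hx] with y hy
  rw [← intervalIntegral.integral_Ioi_sub_Ioi hq (le_of_lt hy), sub_sub_cancel]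

theorem eq_neg_integral_Ioi_of_hasDerivAt {g g' : ℝ → E} {a x : ℝ}
    (hd : ∀ y ∈ Ioi a, HasDerivAt g (g' y) y) (hg : IntegrableOn g (Ioi a))
    (hg' : IntegrableOn g' (Ioi a)) (hx : a < x) :
    g x = -∫ t in Ioi x, g' t := by
  have hsub : Ioi x ⊆ Ioi a := Ioi_subset_Ioi hx.le
  rw [integral_Ioi_of_hasDerivAt_of_tendsto (hd x hx).continuousAt.continuousWithinAt
    (fun y hy => hd y (hsub hy)) (hg'.mono_set hsub)
    (tendsto_zero_of_hasDerivAt_of_integrableOn_Ioi hd hg' hg), zero_sub, neg_neg]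

end Tail

theorem integrableOn_Ioi_integral_Ioi {h : ℝ → ℝ} {a : ℝ} (hcont : ContinuousOn h (Ioi a))
    (hnonneg : ∀ t ∈ Ioi a, 0 ≤ h t) (hh : IntegrableOn h (Ioi a))
    (hth : IntegrableOn (fun t => t * h t) (Ioi a)) :
    IntegrableOn (fun x => ∫ t in Ioi x, h t) (Ioi a) := by
  have htail_nonneg : ∀ x, a ≤ x → 0 ≤ ∫ t in Ioi x, h t := fun x hx =>
    setIntegral_nonneg measurableSet_Ioi fun t ht => hnonneg t (lt_of_le_of_lt hx ht)
  have hmul_tail_le : ∀ x, a ≤ x → x * ∫ t in Ioi x, h t ≤ ∫ t in Ioi x, t * h t := by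
    intro x hx
    have hsub : Ioi x ⊆ Ioi a := Ioi_subset_Ioi hx
    rw [← integral_const_mul]
    refine setIntegral_mono_on ((hh.mono_set hsub).const_mul x) (hth.mono_set hsub)
      measurableSet_Ioi fun t ht => ?_
    exact mul_le_mul_of_nonneg_right (le_of_lt ht) (hnonneg t (hsub ht))
  -- The tail is the (nonnegative) derivative of `W x = x ∫_x^∞ h - ∫_x^∞ t h(t)`, and `W → 0`.
  have hW : Tendsto (fun x => x * (∫ t in Ioi x, h t) - ∫ t in Ioi x, t * h t) atTop (𝓝 0) := by
    have hlim : Tendsto (fun x => ∫ t in Ioi x, t * h t) atTop (𝓝 0) :=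
      tendsto_integral_Ioi_zero tendsto_id
    have hmul_tail : Tendsto (fun x => x * ∫ t in Ioi x, h t) atTop (𝓝 0) := by
      refine squeeze_zero' ?_ ?_ hlim
      · filter_upwards [eventually_ge_atTop (max a 0)] with x hx
        exact mul_nonneg (le_of_max_le_right hx) (htail_nonneg x (le_of_max_le_left hx))
      · filter_upwards [eventually_ge_atTop a] with x hx
        exact hmul_tail_le x hx
    simpa using hmul_tail.sub hlim
  refine integrableOn_Ioi_deriv_of_nonneg ((continuousWithinAt_id.mul
    hh.continuousWithinAt_Ici_primitive_Ioi).sub hth.continuousWithinAt_Ici_primitive_Ioi)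
    (fun x hx => ?_) (fun x hx => htail_nonneg x (le_of_lt hx)) hW
  have hcx : ContinuousAt h x := hcont.continuousAt (Ioi_mem_nhds hx)
  refine (((hasDerivAt_id x).mul (hasDerivAt_integral_Ioi hh hx hcx)).sub
    (hasDerivAt_integral_Ioi hth hx (continuousAt_id.mul hcx))).congr_deriv ?_
  simp only [id]
  ring

section WeightedDerivative

variable {g g' : ℝ → ℝ} {a : ℝ}

theorem integrableOn_pow_mul_norm {m : ℕ} (ha : 0 ≤ a)
    (hm : IntegrableOn (fun t => t ^ m * g' t) (Ioi a)) :
    IntegrableOn (fun t => t ^ m * ‖g' t‖) (Ioi a) := by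
  refine IntegrableOn.congr_fun hm.norm (fun t ht => ?_) measurableSet_Ioi
  have ht0 : 0 ≤ t := ha.trans (le_of_lt ht)
  simp only [norm_mul, norm_pow, Real.norm_of_nonneg ht0]

theorem norm_pow_mul_le_integral_Ioi (m : ℕ) (ha : 0 ≤ a)
    (hd : ∀ x ∈ Ioi a, HasDerivAt g (g' x) x) (hg : IntegrableOn g (Ioi a))
    (hg' : IntegrableOn g' (Ioi a)) (hm : IntegrableOn (fun t => t ^ m * ‖g' t‖) (Ioi a))
    {x : ℝ} (hx : a < x) :
    ‖x ^ m * g x‖ ≤ ∫ t in Ioi x, t ^ m * ‖g' t‖ := by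
  have hx0 : 0 ≤ x := ha.trans hx.le
  have hsub : Ioi x ⊆ Ioi a := Ioi_subset_Ioi hx.le
  calc ‖x ^ m * g x‖ = x ^ m * ‖∫ t in Ioi x, g' t‖ := by
        rw [norm_mul, norm_pow, Real.norm_of_nonneg hx0,
          eq_neg_integral_Ioi_of_hasDerivAt hd hg hg' hx, norm_neg]
    _ ≤ x ^ m * ∫ t in Ioi x, ‖g' t‖ := by gcongr; exact norm_integral_le_integral_norm _
    _ = ∫ t in Ioi x, x ^ m * ‖g' t‖ := (integral_const_mul _ _).symm
    _ ≤ ∫ t in Ioi x, t ^ m * ‖g' t‖ :=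
        setIntegral_mono_on ((hg'.mono_set hsub).norm.const_mul _) (hm.mono_set hsub)
          measurableSet_Ioi fun t ht => by gcongr; exact le_of_lt ht

theorem tendsto_pow_mul_atTop_zero_of_integrableOn_pow_mul_deriv (m : ℕ) (ha : 0 ≤ a)
    (hd : ∀ x ∈ Ioi a, HasDerivAt g (g' x) x) (hg : IntegrableOn g (Ioi a))
    (hg' : IntegrableOn g' (Ioi a)) (hm : IntegrableOn (fun t => t ^ m * g' t) (Ioi a)) :
    Tendsto (fun x => x ^ m * g x) atTop (𝓝 0) := by
  have htail : Tendsto (fun x => ∫ t in Ioi x, t ^ m * ‖g' t‖) atTop (𝓝 0) :=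
    tendsto_integral_Ioi_zero tendsto_id
  refine squeeze_zero_norm' ?_ htail
  filter_upwards [eventually_gt_atTop a] with x hx
  exact norm_pow_mul_le_integral_Ioi m ha hd hg hg' (integrableOn_pow_mul_norm ha hm) hx

theorem integrableOn_pow_mul_of_integrableOn_pow_succ_mul_deriv (m : ℕ) (ha : 0 ≤ a)
    (hd : ∀ x ∈ Ioi a, HasDerivAt g (g' x) x) (hcont : ContinuousOn g' (Ioi a))
    (hg : IntegrableOn g (Ioi a)) (hg' : IntegrableOn g' (Ioi a))
    (hm : IntegrableOn (fun t => t ^ (m + 1) * g' t) (Ioi a)) :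
    IntegrableOn (fun x => x ^ m * g x) (Ioi a) := by
  set h : ℝ → ℝ := fun t => t ^ m * ‖g' t‖
  have hcont_h : ContinuousOn h (Ioi a) := (continuousOn_pow m).mul hcont.norm
  have hth : IntegrableOn (fun t => t * h t) (Ioi a) := by
    refine (integrableOn_pow_mul_norm ha hm).congr_fun (fun t _ => ?_) measurableSet_Ioi
    simp only [h]
    ring
  have hh : IntegrableOn h (Ioi a) := by
    refine Integrable.mono' (hg'.norm.add hth) (hcont_h.aestronglyMeasurable measurableSet_Ioi)
      ((ae_restrict_iff' measurableSet_Ioi).2 (ae_of_all _ fun t ht => ?_))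
    have ht0 : 0 ≤ t := ha.trans (le_of_lt ht)
    have hpow : t ^ m ≤ 1 + t * t ^ m := by
      rcases le_total t 1 with ht1 | ht1
      · nlinarith [pow_le_one₀ ht0 ht1 (n := m), pow_nonneg ht0 m]
      · nlinarith [one_le_pow₀ ht1 (n := m)]
    simp only [h, Pi.add_apply, norm_mul, norm_pow, norm_norm, Real.norm_of_nonneg ht0]
    nlinarith [norm_nonneg (g' t)]
  have hgcont : ContinuousOn g (Ioi a) := fun x hx => (hd x hx).continuousAt.continuousWithinAt
  refine Integrable.mono' (integrableOn_Ioi_integral_Ioi hcont_h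
    (fun t ht => by positivity [ha.trans (le_of_lt ht)]) hh hth)
    (((continuousOn_pow m).mul hgcont).aestronglyMeasurable measurableSet_Ioi)
    ((ae_restrict_iff' measurableSet_Ioi).2 (ae_of_all _ fun x hx =>
      norm_pow_mul_le_integral_Ioi m ha hd hg hg' hh hx))

end WeightedDerivative

theorem stmt5_general (k : ℕ) (F : ℕ → ℝ → ℝ)
    (hderiv : ∀ ℓ < k, ∀ x ∈ Set.Ioi (1 : ℝ), HasDerivAt (F ℓ) (F (ℓ + 1) x) x)
    (hcont : ContinuousOn (F k) (Set.Ioi (1 : ℝ)))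
    (hintF : ∀ ℓ ≤ k, MeasureTheory.IntegrableOn (F ℓ) (Set.Ioi 1))
    (hint : MeasureTheory.IntegrableOn (fun x : ℝ => x ^ k * F k x) (Set.Ioi 1)) :
    (∀ ℓ < k, MeasureTheory.IntegrableOn (fun x : ℝ => x ^ ℓ * F ℓ x) (Set.Ioi 1)) ∧
    (∀ ℓ : ℕ, 1 ≤ ℓ → ℓ ≤ k →
      Filter.Tendsto (fun x : ℝ => x ^ ℓ * F (ℓ - 1) x) Filter.atTop (nhds 0)) := by
  have hcontF : ∀ ℓ ≤ k, ContinuousOn (F ℓ) (Ioi 1) := by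
    intro ℓ hℓ
    rcases hℓ.lt_or_eq with hlt | rfl
    · exact fun x hx => (hderiv ℓ hlt x hx).continuousAt.continuousWithinAt
    · exact hcont
  have hweighted : ∀ ℓ ≤ k, IntegrableOn (fun x : ℝ => x ^ ℓ * F ℓ x) (Ioi 1) := by
    intro ℓ hℓ
    induction hℓ using Nat.decreasingInduction with
    | self => exact hint
    | of_succ ℓ hlt ih =>
      exact integrableOn_pow_mul_of_integrableOn_pow_succ_mul_deriv ℓ zero_le_one (hderiv ℓ hlt)
        (hcontF _ hlt) (hintF ℓ hlt.le) (hintF _ hlt) ih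
  refine ⟨fun ℓ hℓ => hweighted ℓ hℓ.le, fun ℓ hℓ hℓk => ?_⟩
  obtain ⟨j, rfl⟩ : ∃ j, ℓ = j + 1 := ⟨ℓ - 1, by omega⟩
  simpa using tendsto_pow_mul_atTop_zero_of_integrableOn_pow_mul_deriv (j + 1) zero_le_one
    (hderiv j hℓk) (hintF j (by omega)) (hintF _ hℓk) (hweighted _ hℓk)

/-- Lemma 3.2 (tail control at infinity): if `f` is `C^k` on `(1,∞)` (encoded via the family
`F` of successive derivatives, `F 0 = f`) with `f^{(ℓ)}` integrable on `(1,∞)` for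
`0 ≤ ℓ ≤ k`, and `x ↦ x^k f^{(k)}(x)` is integrable on `(1,∞)`, then
`x ↦ x^ℓ f^{(ℓ)}(x)` is integrable on `(1,∞)` for `0 ≤ ℓ ≤ k-1`, and
`x^ℓ f^{(ℓ-1)}(x) → 0` as `x → ∞` for `1 ≤ ℓ ≤ k`. -/
theorem stmt5 (k : ℕ) (hk : 1 ≤ k) (f : ℝ → ℝ) (F : ℕ → ℝ → ℝ)
    (hF0 : F 0 = f)
    (hderiv : ∀ ℓ < k, ∀ x ∈ Set.Ioi (1 : ℝ), HasDerivAt (F ℓ) (F (ℓ + 1) x) x)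
    (hcont : ContinuousOn (F k) (Set.Ioi (1 : ℝ)))
    (hintF : ∀ ℓ ≤ k, MeasureTheory.IntegrableOn (F ℓ) (Set.Ioi 1))
    (hint : MeasureTheory.IntegrableOn (fun x : ℝ => x ^ k * F k x) (Set.Ioi 1)) :
    (∀ ℓ < k, MeasureTheory.IntegrableOn (fun x : ℝ => x ^ ℓ * F ℓ x) (Set.Ioi 1)) ∧
    (∀ ℓ : ℕ, 1 ≤ ℓ → ℓ ≤ k →
      Filter.Tendsto (fun x : ℝ => x ^ ℓ * F (ℓ - 1) x) Filter.atTop (nhds 0)) :=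
  stmt5_general k F hderiv hcont hintF hint
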